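/- If F = (X; f₁,…,f_N) is a point-fibred IFS on a compact Hausdorff space X with attractor A, then the basin of A is all of X; that is, for every nonempty compact subset B of X, lim_{k→∞} F^k(B) = A in the Vietoris topology on K(X), where F(B) = ⋃_{i=1}^N f_i(B). -/

import Mathlib

/-!
Every point of `⋂ₖ Fᵏ(X)` lies, by compactness of the code space `I^ℕ`, in `f_{σ|k}(X)` for all `k`
and a single code `σ`, i.e. in `Π(σ)`. The sets `f_{σ|k}(A) ⊆ A` are nested, compact and nonempty,
so `Π(σ)` meets `A`, and being a singleton it lies in `A`.
So the decreasing compact sets `Fᵏ(X)` eventually enter the open set `U` around `A` on which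
`A` attracts; hence `Fᵐ(B) ⊆ U` for every `B`, and `Fᵏ(B) = F^{k-m}(Fᵐ(B)) → A`.
-/

open Set Topology Filter

/-- `seqComp f σ k` is the composition `f_{σ|k} = f_{σ₁} ∘ f_{σ₂} ∘ ⋯ ∘ f_{σ_k}`
(with the sequence `σ` indexed from `0`). -/
def seqComp {X : Type*} {N : ℕ} (f : Fin N → X → X) (σ : ℕ → Fin N) : ℕ → X → X
  | 0 => id
  | k + 1 => seqComp f σ k ∘ f (σ k)

/-- `PiMap f σ = ⋂_{k ≥ 1} f_{σ₁} ∘ ⋯ ∘ f_{σ_k}(X)`. -/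
def PiMap {X : Type*} {N : ℕ} (f : Fin N → X → X) (σ : ℕ → Fin N) : Set X :=
  ⋂ k : ℕ, seqComp f σ (k + 1) '' Set.univ

/-- The Vietoris topology (on all subsets of `X`; the Vietoris topology on the
nonempty compact subsets `K(X)` is the subspace topology it induces): it is generated
by the sets `{B | B ⊆ U}` and `{B | B ∩ U ≠ ∅}` for `U ⊆ X` open. -/
def vietoris (X : Type*) [TopologicalSpace X] : TopologicalSpace (Set X) :=
  TopologicalSpace.generateFrom
    ({S | ∃ U : Set X, IsOpen U ∧ S = {B : Set X | B ⊆ U}} ∪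
     {S | ∃ U : Set X, IsOpen U ∧ S = {B : Set X | (B ∩ U).Nonempty}})

section Hutchinson

variable {X ι : Type*} (f : ι → X → X)

def hutchinson (C : Set X) : Set X := ⋃ i, f i '' C

theorem hutchinson_mono : Monotone (hutchinson f) :=
  fun _ _ h => iUnion_mono fun _ => image_mono h

theorem antitone_hutchinson_iterate_univ : Antitone fun k => (hutchinson f)^[k] univ :=
  antitone_nat_of_succ_le fun k => by
    rw [Function.iterate_succ_apply]
    exact (hutchinson_mono f).iterate k (subset_univ _)

theorem Set.Nonempty.hutchinson_iterate [Nonempty ι] {B : Set X} (hB : B.Nonempty) (k : ℕ) :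
    ((hutchinson f)^[k] B).Nonempty := by
  induction k with
  | zero => exact hB
  | succ k ih =>
    rw [Function.iterate_succ_apply']
    exact (ih.image (f (Classical.arbitrary ι))).mono (subset_iUnion (fun i => f i '' _) _)

variable [TopologicalSpace X]

theorem IsCompact.hutchinson_iterate [Finite ι] (hf : ∀ i, Continuous (f i)) {B : Set X}
    (hB : IsCompact B) (k : ℕ) : IsCompact ((hutchinson f)^[k] B) := by
  induction k with
  | zero => exact hB
  | succ k ih =>
    rw [Function.iterate_succ_apply']
    exact isCompact_iUnion fun i => ih.image (hf i)

theorem exists_hutchinson_iterate_univ_subset [CompactSpace X] [T2Space X] [Finite ι]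
    (hf : ∀ i, Continuous (f i)) {U : Set X} (hU : IsOpen U)
    (h : ⋂ k, (hutchinson f)^[k] univ ⊆ U) : ∃ m, (hutchinson f)^[m] univ ⊆ U :=
  exists_subset_nhds_of_isCompact (antitone_hutchinson_iterate_univ f).directed_ge
    (fun k => isCompact_univ.hutchinson_iterate f hf k) fun _ hx => hU.mem_nhds (h hx)

end Hutchinson

section SeqComp

variable {X : Type*} {N : ℕ} (f : Fin N → X → X)

theorem seqComp_succ (σ : ℕ → Fin N) (k : ℕ) :
    seqComp f σ (k + 1) = seqComp f σ k ∘ f (σ k) := rfl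

theorem seqComp_congr {σ τ : ℕ → Fin N} {k : ℕ} (h : ∀ j < k, σ j = τ j) :
    seqComp f σ k = seqComp f τ k := by
  induction k with
  | zero => rfl
  | succ k ih =>
    rw [seqComp_succ, seqComp_succ, ih fun j hj => h j (by omega), h k k.lt_succ_self]

theorem mem_piMap_iff {σ : ℕ → Fin N} {x : X} :
    x ∈ PiMap f σ ↔ ∀ k, x ∈ range (seqComp f σ (k + 1)) := by
  simp only [PiMap, image_univ, mem_iInter]

theorem mapsTo_seqComp {A : Set X} (hA : ∀ i, MapsTo (f i) A A) (σ : ℕ → Fin N) (k : ℕ) :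
    MapsTo (seqComp f σ k) A A := by
  induction k with
  | zero => exact mapsTo_id A
  | succ k ih => exact ih.comp (hA _)

theorem hutchinson_iterate_eq_iUnion_seqComp [Nonempty (Fin N)] (B : Set X) (k : ℕ) :
    (hutchinson f)^[k] B = ⋃ σ : ℕ → Fin N, seqComp f σ k '' B := by
  induction k generalizing B with
  | zero => simp only [Function.iterate_zero_apply, seqComp, image_id, iUnion_const]
  | succ k ih =>
    rw [Function.iterate_succ_apply, ih]
    refine Subset.antisymm ?_ ?_
    · simp only [hutchinson, image_iUnion, ← image_comp, iUnion_subset_iff]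
      intro σ i
      have hσ : seqComp f (Function.update σ k i) k = seqComp f σ k :=
        seqComp_congr f fun j hj => Function.update_of_ne hj.ne _ _
      refine subset_iUnion_of_subset (Function.update σ k i) ?_
      rw [seqComp_succ, hσ, Function.update_self]
    · exact iUnion_subset fun σ => subset_iUnion_of_subset σ <| by
        rw [seqComp_succ, image_comp]
        exact image_mono (subset_iUnion (fun i => f i '' B) (σ k))

theorem isLocallyConstant_seqComp (k : ℕ) :
    IsLocallyConstant fun σ : ℕ → Fin N => seqComp f σ k := by
  refine (IsLocallyConstant.iff_eventually_eq _).2 fun σ => ?_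
  have : ∀ᶠ τ in 𝓝 σ, ∀ j ∈ Finset.range k, τ j = σ j :=
    (Finset.range k).eventually_all.2 fun j _ =>
      (continuous_apply j).continuousAt (mem_nhds_discrete.2 rfl : {σ j} ∈ 𝓝 (σ j))
  filter_upwards [this] with τ hτ
  exact seqComp_congr f fun j hj => hτ j (Finset.mem_range.2 hj)

theorem exists_forall_mem_range_seqComp {x : X} (hx : ∀ k, ∃ σ, x ∈ range (seqComp f σ k)) :
    ∃ σ, ∀ k, x ∈ range (seqComp f σ k) := by
  have hclosed (k : ℕ) : IsClosed {σ : ℕ → Fin N | x ∈ range (seqComp f σ k)} :=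
    isOpen_compl_iff.1 (isLocallyConstant_seqComp f k {g | x ∈ range g}ᶜ)
  obtain ⟨σ, hσ⟩ := IsCompact.nonempty_iInter_of_sequence_nonempty_isCompact_isClosed
    (fun k => {σ | x ∈ range (seqComp f σ k)}) (fun k σ hσ => range_comp_subset_range _ _ hσ)
    hx (hclosed 0).isCompact hclosed
  exact ⟨σ, fun k => mem_iInter.1 hσ k⟩

variable [TopologicalSpace X]

theorem continuous_seqComp (hf : ∀ i, Continuous (f i)) (σ : ℕ → Fin N) (k : ℕ) :
    Continuous (seqComp f σ k) := by
  induction k with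
  | zero => exact continuous_id
  | succ k ih => exact ih.comp (hf _)

variable [T2Space X]

theorem piMap_inter_nonempty (hf : ∀ i, Continuous (f i)) {A : Set X} (hA : A.Nonempty)
    (hAc : IsCompact A) (hAf : ∀ i, MapsTo (f i) A A) (σ : ℕ → Fin N) : (PiMap f σ ∩ A).Nonempty := by
  have hcpt (k : ℕ) : IsCompact (seqComp f σ (k + 1) '' A) :=
    hAc.image (continuous_seqComp f hf σ _)
  obtain ⟨y, hy⟩ := IsCompact.nonempty_iInter_of_sequence_nonempty_isCompact_isClosed
    (fun k => seqComp f σ (k + 1) '' A)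
    (fun k => by rw [seqComp_succ, image_comp]; exact image_mono (hAf _).image_subset)
    (fun k => hA.image _) (hcpt 0) fun k => (hcpt k).isClosed
  have hyk := mem_iInter.1 hy
  exact ⟨y, (mem_piMap_iff f).2 fun k => image_subset_range _ _ (hyk k),
    (mapsTo_seqComp f hAf σ 1).image_subset (hyk 0)⟩

theorem iInter_hutchinson_iterate_univ_subset [Nonempty (Fin N)] (hf : ∀ i, Continuous (f i))
    (hpf : ∀ σ, (PiMap f σ).Subsingleton) {A : Set X} (hA : A.Nonempty) (hAc : IsCompact A)
    (hAf : ∀ i, MapsTo (f i) A A) : ⋂ k, (hutchinson f)^[k] univ ⊆ A := by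
  intro x hx
  have hxk (k : ℕ) : ∃ σ, x ∈ range (seqComp f σ k) := by
    simpa only [hutchinson_iterate_eq_iUnion_seqComp, image_univ, mem_iUnion]
      using mem_iInter.1 hx k
  obtain ⟨σ, hσ⟩ := exists_forall_mem_range_seqComp f hxk
  obtain ⟨y, hyσ, hyA⟩ := piMap_inter_nonempty f hf hA hAc hAf σ
  exact hpf σ ((mem_piMap_iff f).2 fun k => hσ (k + 1)) hyσ ▸ hyA

end SeqComp

theorem basin_eq_univ_general
    {X : Type*} [TopologicalSpace X] [CompactSpace X] [T2Space X]
    {N : ℕ} (hN : 0 < N) (f : Fin N → X → X) (hf : ∀ i, Continuous (f i))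
    (hpf : ∀ σ : ℕ → Fin N, ∃ x : X, PiMap f σ = {x})
    -- `A` is an attractor of `F`:
    (A : Set X) (hA₁ : A.Nonempty) (hA₂ : IsCompact A) (hA₃ : (⋃ i, f i '' A) = A)
    (hA₄ : ∃ U : Set X, IsOpen U ∧ A ⊆ U ∧
      ∀ B : Set X, B.Nonempty → IsCompact B → B ⊆ U →
        Filter.Tendsto (fun k => (fun C : Set X => ⋃ i, f i '' C)^[k] B)
          Filter.atTop (@nhds (Set X) (vietoris X) A)) :
    ∀ B : Set X, B.Nonempty → IsCompact B →
      Filter.Tendsto (fun k => (fun C : Set X => ⋃ i, f i '' C)^[k] B)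
        Filter.atTop (@nhds (Set X) (vietoris X) A) := by
  have : Nonempty (Fin N) := Fin.pos_iff_nonempty.1 hN
  obtain ⟨U, hU, hAU, hbasin⟩ := hA₄
  have hAf (i : Fin N) : MapsTo (f i) A A :=
    mapsTo_iff_image_subset.2 ((subset_iUnion (fun i => f i '' A) i).trans hA₃.subset)
  have hsingleton : ∀ σ, (PiMap f σ).Subsingleton := fun σ => by
    obtain ⟨x, hx⟩ := hpf σ
    exact hx ▸ subsingleton_singleton
  obtain ⟨m, hm⟩ := exists_hutchinson_iterate_univ_subset f hf hU
    ((iInter_hutchinson_iterate_univ_subset f hf hsingleton hA₁ hA₂ hAf).trans hAU)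
  intro B hB hBc
  have hmB : (hutchinson f)^[m] B ⊆ U := ((hutchinson_mono f).iterate m (subset_univ B)).trans hm
  refine (tendsto_add_atTop_iff_nat m).1 ?_
  simp only [Function.iterate_add_apply]
  exact hbasin _ (hB.hutchinson_iterate f m) (hBc.hutchinson_iterate f hf m) hmB

/-- If `F` is a point-fibred IFS on a compact Hausdorff space `X` with
attractor `A`, then the basin of `A` is all of `X`: for every nonempty compact `B ⊆ X`,
`F^k(B) → A` in the Vietoris topology, where `F(B) = ⋃ᵢ fᵢ(B)`. -/
theorem basin_eq_univ
    {X : Type*} [TopologicalSpace X] [CompactSpace X] [T2Space X] [Nonempty X]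
    {N : ℕ} (hN : 0 < N) (f : Fin N → X → X) (hf : ∀ i, Continuous (f i))
    (hpf : ∀ σ : ℕ → Fin N, ∃ x : X, PiMap f σ = {x})
    -- `A` is an attractor of `F`:
    (A : Set X) (hA₁ : A.Nonempty) (hA₂ : IsCompact A) (hA₃ : (⋃ i, f i '' A) = A)
    (hA₄ : ∃ U : Set X, IsOpen U ∧ A ⊆ U ∧
      ∀ B : Set X, B.Nonempty → IsCompact B → B ⊆ U →
        Filter.Tendsto (fun k => (fun C : Set X => ⋃ i, f i '' C)^[k] B)
          Filter.atTop (@nhds (Set X) (vietoris X) A)) :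
    ∀ B : Set X, B.Nonempty → IsCompact B →
      Filter.Tendsto (fun k => (fun C : Set X => ⋃ i, f i '' C)^[k] B)
        Filter.atTop (@nhds (Set X) (vietoris X) A) :=
  basin_eq_univ_general hN f hf hpf A hA₁ hA₂ hA₃ hA₄
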